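/- Necessity of a Pareto-ranked splitting of an obedient experiment: If there exists an obedient ambiguous experiment (σ, μ) with U_s(σ, μ, τ*) > u_s^BP (ambiguous communication benefits the sender), then φ_r is not affine and there exists an obedient experiment σ̂ together with a Pareto-ranked splitting (σ̄, σ̲, λ) of σ̂ such that u_s(σ̄, τ*) > u_s^BP. -/

import Mathlib

open Finset

/-- A stochastic kernel from `X` to `Y`: each row `k x` is a probability vector on `Y`.
An experiment is a kernel from states `Ω` to messages; a receiver strategy is a kernel
from messages to actions `A`. -/
def IsKernel {X Y : Type*} [Fintype Y] (k : X → Y → ℝ) : Prop :=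
  (∀ x y, 0 ≤ k x y) ∧ ∀ x, ∑ y, k x y = 1

/-- A probability vector on a finite type. -/
def IsProb {Θ : Type*} [Fintype Θ] (μ : Θ → ℝ) : Prop :=
  (∀ θ, 0 ≤ μ θ) ∧ ∑ θ, μ θ = 1

/-- The obedient strategy `τ*`: take the recommended action with probability one. -/
noncomputable def tauStar {A : Type*} [DecidableEq A] : A → A → ℝ :=
  fun m a => if a = m then (1 : ℝ) else 0

/-- Expected payoff `u_i(σ, τ) = ∑_{ω,m,a} p(ω) σ(m|ω) τ(a|m) u_i(a,ω)`. -/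
noncomputable def expPayoff {Ω M A : Type*} [Fintype Ω] [Fintype M] [Fintype A]
    (p : Ω → ℝ) (u : A → Ω → ℝ) (σ : Ω → M → ℝ) (τ : M → A → ℝ) : ℝ :=
  ∑ ω, ∑ m, ∑ a, p ω * σ ω m * τ m a * u a ω

/-- Obedience of a single (unambiguous) canonical experiment: `τ*` is a best reply. -/
def Obedient {Ω A : Type*} [Fintype Ω] [Fintype A] [DecidableEq A]
    (p : Ω → ℝ) (ur : A → Ω → ℝ) (σ : Ω → A → ℝ) : Prop :=
  ∀ τ : A → A → ℝ, IsKernel τ → expPayoff p ur σ τ ≤ expPayoff p ur σ tauStar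

/-- Obedience of an ambiguous experiment `(σ, μ)` for a smooth-ambiguity receiver with
index `φr`:  `τ*` maximizes `τ ↦ U_r(σ, μ, τ) = φr⁻¹(∑_θ μ_θ φr(u_r(σ_θ, τ)))`; since `φr`
is strictly increasing this is equivalent to `τ*` maximizing `τ ↦ ∑_θ μ_θ φr(u_r(σ_θ, τ))`. -/
def AmbObedient {Ω A Θ : Type*} [Fintype Ω] [Fintype A] [DecidableEq A] [Fintype Θ]
    (φr : ℝ → ℝ) (p : Ω → ℝ) (ur : A → Ω → ℝ) (σ : Θ → Ω → A → ℝ) (μ : Θ → ℝ) : Prop :=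
  ∀ τ : A → A → ℝ, IsKernel τ →
    ∑ θ, μ θ * φr (expPayoff p ur (σ θ) τ) ≤ ∑ θ, μ θ * φr (expPayoff p ur (σ θ) tauStar)

/-- A smooth ambiguity index: strictly increasing, concave, differentiable. -/
def SmoothIndex (φ : ℝ → ℝ) : Prop :=
  StrictMono φ ∧ ConcaveOn ℝ Set.univ φ ∧ Differentiable ℝ φ

/-- Two experiments are (strictly) Pareto ranked: under obedience, sender and receiver
strictly rank them the same way. -/
def ParetoRanked {Ω A : Type*} [Fintype Ω] [Fintype A] [DecidableEq A]
    (p : Ω → ℝ) (us ur : A → Ω → ℝ) (σ σ' : Ω → A → ℝ) : Prop :=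
  (expPayoff p us σ' tauStar < expPayoff p us σ tauStar ∧
      expPayoff p ur σ' tauStar < expPayoff p ur σ tauStar) ∨
  (expPayoff p us σ tauStar < expPayoff p us σ' tauStar ∧
      expPayoff p ur σ tauStar < expPayoff p ur σ' tauStar)

/-- Two experiments are weakly Pareto ranked. -/
def WeaklyParetoRanked {Ω A : Type*} [Fintype Ω] [Fintype A] [DecidableEq A]
    (p : Ω → ℝ) (us ur : A → Ω → ℝ) (σ σ' : Ω → A → ℝ) : Prop :=
  (expPayoff p us σ' tauStar ≤ expPayoff p us σ tauStar ∧
      expPayoff p ur σ' tauStar ≤ expPayoff p ur σ tauStar) ∨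
  (expPayoff p us σ tauStar ≤ expPayoff p us σ' tauStar ∧
      expPayoff p ur σ tauStar ≤ expPayoff p ur σ' tauStar)

/-- Pointwise convex combination of two experiments. -/
noncomputable def mixExp {Ω A : Type*} (lam : ℝ) (σ1 σ2 : Ω → A → ℝ) : Ω → A → ℝ :=
  fun ω a => lam * σ1 ω a + (1 - lam) * σ2 ω a

/-- `(σbar, σlo, lam)` is a Pareto-ranked splitting of the experiment `σ`. -/
def ParetoRankedSplitting {Ω A : Type*} [Fintype Ω] [Fintype A] [DecidableEq A]
    (p : Ω → ℝ) (us ur : A → Ω → ℝ) (σbar σlo : Ω → A → ℝ) (lam : ℝ) (σ : Ω → A → ℝ) : Prop :=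
  IsKernel σbar ∧ IsKernel σlo ∧ lam ∈ Set.Ioo (0 : ℝ) 1 ∧
    mixExp lam σbar σlo = σ ∧ ParetoRanked p us ur σbar σlo

/-- The `((σbar, σlo), lam)`-probability premium of a player with utility `u` and index `φ`. -/
noncomputable def probPremium {Ω A : Type*} [Fintype Ω] [Fintype A] [DecidableEq A]
    (p : Ω → ℝ) (u : A → Ω → ℝ) (φ : ℝ → ℝ) (σbar σlo : Ω → A → ℝ) (lam : ℝ) : ℝ :=
  (φ (expPayoff p u (mixExp lam σbar σlo) tauStar) -
      lam * φ (expPayoff p u σbar tauStar) - (1 - lam) * φ (expPayoff p u σlo tauStar)) /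
    (φ (expPayoff p u σbar tauStar) - φ (expPayoff p u σlo tauStar))

/-- The set of `φs`-transformed sender values attainable by obedient ambiguous experiments;
the value of the sender's problem `(P)` equals `u` iff `φs u` is the least upper bound of
this set (since `φs` is continuous and strictly increasing). -/
def senderValues {Ω A : Type*} [Fintype Ω] [Fintype A] [DecidableEq A]
    (φs φr : ℝ → ℝ) (p : Ω → ℝ) (us ur : A → Ω → ℝ) : Set ℝ :=
  {x | ∃ (n : ℕ) (σ : Fin n → Ω → A → ℝ) (μ : Fin n → ℝ),
    (∀ j, IsKernel (σ j)) ∧ IsProb μ ∧ AmbObedient φr p ur σ μ ∧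
    x = ∑ j, μ j * φs (expPayoff p us (σ j) tauStar)}

/-- The set of feasible values of the auxiliary program `(Φ*(u))`: sums
`∑_θ λ_θ Φ_u(σ_θ)` over splittings `(λ_θ, σ_θ)` of obedient experiments, where
`Φ_u(σ) = (φs(u_s(σ,τ*)) − φs(u)) / φr'(u_r(σ,τ*))`. -/
def phiProgram {Ω A : Type*} [Fintype Ω] [Fintype A] [DecidableEq A]
    (φs φr : ℝ → ℝ) (p : Ω → ℝ) (us ur : A → Ω → ℝ) (u : ℝ) : Set ℝ :=
  {x | ∃ (n : ℕ) (σ : Fin n → Ω → A → ℝ) (lam : Fin n → ℝ),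
    (∀ j, IsKernel (σ j)) ∧ IsProb lam ∧
    Obedient p ur (fun ω a => ∑ j, lam j * σ j ω a) ∧
    x = ∑ j, lam j * ((φs (expPayoff p us (σ j) tauStar) - φs u) /
      deriv φr (expPayoff p ur (σ j) tauStar))}


/-!
Obedience of `(σ, μ)` yields the receiver's first-order condition at `τ*`: the average
experiment with weights tilted to `ν_θ ∝ μ_θ φr'(u_r(σ_θ, τ*))` is obedient, hence worth at most
`u_s^BP` to the sender. By Jensen the plain average `σ̄ = ∑ μ_θ σ_θ` is worth more than `u_s^BP`,
so it is not obedient and `ν ≠ μ`; for affine `φr` the tilt would be trivial. As `φr'` is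
decreasing, `ν` shifts weight towards the experiments the receiver likes less, so the receiver
also strictly prefers `σ̄` to the tilted average `σ̂`. Finally `λ μ ≤ ν` for some `λ ∈ (0, 1)`,
so `σ̂ = λ σ̄ + (1 - λ) σ̲` for a kernel `σ̲`, which both players rank below `σ̄`.
-/

noncomputable def convexComb {Θ Ω A : Type*} [Fintype Θ] (c : Θ → ℝ) (σ : Θ → Ω → A → ℝ) :
    Ω → A → ℝ :=
  fun ω a => ∑ θ, c θ * σ θ ω a

noncomputable def tilt {Θ : Type*} [Fintype Θ] (μ f : Θ → ℝ) (θ : Θ) : ℝ :=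
  μ θ * f θ / ∑ θ', μ θ' * f θ'

section Kernels

variable {Θ X Y : Type*} [Fintype Θ]

theorem isKernel_tauStar [Fintype Y] [DecidableEq Y] : IsKernel (tauStar : Y → Y → ℝ) :=
  ⟨fun _ _ => by unfold tauStar; split_ifs <;> norm_num, fun _ => by simp [tauStar]⟩

theorem IsKernel.mixExp [Fintype Y] {k₁ k₂ : X → Y → ℝ} (h₁ : IsKernel k₁) (h₂ : IsKernel k₂)
    {lam : ℝ} (hlam : lam ∈ Set.Icc (0 : ℝ) 1) : IsKernel (mixExp lam k₁ k₂) := by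
  refine ⟨fun x y => add_nonneg (mul_nonneg hlam.1 (h₁.1 x y))
    (mul_nonneg (sub_nonneg.2 hlam.2) (h₂.1 x y)), fun x => ?_⟩
  simp only [_root_.mixExp, sum_add_distrib, ← mul_sum, h₁.2, h₂.2]
  ring

theorem IsKernel.convexComb [Fintype Y] {c : Θ → ℝ} {σ : Θ → X → Y → ℝ} (hc : IsProb c)
    (hσ : ∀ θ, IsKernel (σ θ)) : IsKernel (convexComb c σ) := by
  refine ⟨fun x y => sum_nonneg fun θ _ => mul_nonneg (hc.1 θ) ((hσ θ).1 x y), fun x => ?_⟩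
  simp only [_root_.convexComb]
  rw [sum_comm]
  simp only [← mul_sum, (hσ _).2 x, mul_one, hc.2]

theorem mul_convexComb_le {lam : ℝ} {c c' : Θ → ℝ} {σ : Θ → X → Y → ℝ}
    (hσ : ∀ θ x y, 0 ≤ σ θ x y) (h : ∀ θ, lam * c θ ≤ c' θ) (x : X) (y : Y) :
    lam * convexComb c σ x y ≤ convexComb c' σ x y := by
  simp only [convexComb, mul_sum, ← mul_assoc]
  exact sum_le_sum fun θ _ => mul_le_mul_of_nonneg_right (h θ) (hσ θ x y)

end Kernels

section Payoffs

variable {Θ Ω M A : Type*} [Fintype Θ] [Fintype Ω] [Fintype M] [Fintype A]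
  (p : Ω → ℝ) (u : A → Ω → ℝ)

theorem expPayoff_convexComb (c : Θ → ℝ) (σ : Θ → Ω → M → ℝ) (τ : M → A → ℝ) :
    expPayoff p u (convexComb c σ) τ = ∑ θ, c θ * expPayoff p u (σ θ) τ := by
  simp only [expPayoff, convexComb, mul_sum, sum_mul]
  symm
  rw [sum_comm]; refine sum_congr rfl fun ω _ => ?_
  rw [sum_comm]; refine sum_congr rfl fun m _ => ?_
  rw [sum_comm]; refine sum_congr rfl fun a _ => ?_
  exact sum_congr rfl fun θ _ => by ring

theorem expPayoff_mixExp (lam : ℝ) (σ₁ σ₂ : Ω → M → ℝ) (τ : M → A → ℝ) :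
    expPayoff p u (mixExp lam σ₁ σ₂) τ
      = lam * expPayoff p u σ₁ τ + (1 - lam) * expPayoff p u σ₂ τ := by
  simp only [expPayoff, mixExp, mul_sum, ← sum_add_distrib]
  exact sum_congr rfl fun _ _ => sum_congr rfl fun _ _ => sum_congr rfl fun _ _ => by ring

theorem expPayoff_mixExp_right (σ : Ω → M → ℝ) (lam : ℝ) (τ₁ τ₂ : M → A → ℝ) :
    expPayoff p u σ (mixExp lam τ₁ τ₂)
      = lam * expPayoff p u σ τ₁ + (1 - lam) * expPayoff p u σ τ₂ := by
  simp only [expPayoff, mixExp, mul_sum, ← sum_add_distrib]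
  exact sum_congr rfl fun _ _ => sum_congr rfl fun _ _ => sum_congr rfl fun _ _ => by ring

end Payoffs

theorem Antitone.sub_mul_sub_nonpos {g : ℝ → ℝ} (hg : Antitone g) (x y : ℝ) :
    (g x - g y) * (x - y) ≤ 0 := by
  rcases le_total x y with h | h
  · exact mul_nonpos_of_nonneg_of_nonpos (sub_nonneg.2 (hg h)) (sub_nonpos.2 h)
  · exact mul_nonpos_of_nonpos_of_nonneg (sub_nonpos.2 (hg h)) (sub_nonneg.2 h)

theorem Antitone.sub_mul_sub_neg {g : ℝ → ℝ} (hg : Antitone g) {x y : ℝ} (hne : g x ≠ g y) :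
    (g x - g y) * (x - y) < 0 := by
  rcases lt_trichotomy x y with h | rfl | h
  · exact mul_neg_of_pos_of_neg (sub_pos.2 ((hg h.le).lt_of_ne' hne)) (sub_neg.2 h)
  · exact absurd rfl hne
  · exact mul_neg_of_neg_of_pos (sub_neg.2 ((hg h.le).lt_of_ne hne)) (sub_pos.2 h)

theorem ConcaveOn.lt_sum_mul_of_lt_sum_mul_map {Θ : Type*} [Fintype Θ] {φ : ℝ → ℝ}
    (hconc : ConcaveOn ℝ Set.univ φ) (hmono : StrictMono φ) {μ x : Θ → ℝ} (hμ : IsProb μ)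
    {c : ℝ} (h : φ c < ∑ θ, μ θ * φ (x θ)) : c < ∑ θ, μ θ * x θ := by
  refine hmono.lt_iff_lt.1 (h.trans_le ?_)
  simpa using hconc.le_map_sum (t := univ) (fun θ _ => hμ.1 θ) hμ.2 fun θ _ => Set.mem_univ (x θ)

theorem ConcaveOn.deriv_pos_of_strictMono {φ : ℝ → ℝ} (hconc : ConcaveOn ℝ Set.univ φ)
    (hmono : StrictMono φ) {x : ℝ} (hd : DifferentiableAt ℝ φ x) : 0 < deriv φ x := by
  refine lt_of_lt_of_le ?_ (hconc.slope_le_deriv trivial trivial (lt_add_one x) hd)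
  rw [slope_def_field]
  exact div_pos (sub_pos.2 (hmono (lt_add_one x))) (by linarith)

section Weights

variable {Θ : Type*} [Fintype Θ] {μ f : Θ → ℝ}

theorem IsProb.exists_pos (hμ : IsProb μ) : ∃ θ, 0 < μ θ := by
  obtain ⟨θ, -, h⟩ := exists_lt_of_sum_lt (s := univ) (f := fun _ => (0 : ℝ)) (g := μ)
    (by simp [hμ.2])
  exact ⟨θ, h⟩

theorem IsProb.sum_mul_pos (hμ : IsProb μ) (hf : ∀ θ, 0 < f θ) : 0 < ∑ θ, μ θ * f θ := by
  obtain ⟨θ, hθ⟩ := hμ.exists_pos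
  exact sum_pos' (fun θ _ => mul_nonneg (hμ.1 θ) (hf θ).le) ⟨θ, mem_univ θ, mul_pos hθ (hf θ)⟩

theorem sum_tilt_mul (G : Θ → ℝ) :
    ∑ θ, tilt μ f θ * G θ = (∑ θ, μ θ * f θ * G θ) / ∑ θ, μ θ * f θ := by
  simp only [tilt, sum_div, div_mul_eq_mul_div]

theorem isProb_tilt (hμ : IsProb μ) (hf : ∀ θ, 0 < f θ) : IsProb (tilt μ f) :=
  ⟨fun θ => div_nonneg (mul_nonneg (hμ.1 θ) (hf θ).le) (hμ.sum_mul_pos hf).le, by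
    simp only [tilt, ← sum_div, div_self (hμ.sum_mul_pos hf).ne']⟩

theorem IsProb.tilt_const (hμ : IsProb μ) {c : ℝ} (hc : c ≠ 0) : tilt μ (fun _ => c) = μ := by
  funext θ
  simp only [tilt, ← sum_mul, hμ.2, one_mul, mul_div_cancel_right₀ _ hc]

theorem IsProb.exists_mul_le_tilt (hμ : IsProb μ) (hf : ∀ θ, 0 < f θ) :
    ∃ lam ∈ Set.Ioo (0 : ℝ) 1, ∀ θ, lam * μ θ ≤ tilt μ f θ := by
  have hZ := hμ.sum_mul_pos hf
  obtain ⟨θ₀, -⟩ := hμ.exists_pos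
  obtain ⟨θm, -, hmin⟩ := exists_min_image univ f ⟨θ₀, mem_univ θ₀⟩
  refine ⟨min (1 / 2) (f θm / ∑ θ, μ θ * f θ),
    ⟨lt_min (by norm_num) (div_pos (hf θm) hZ), (min_le_left _ _).trans_lt (by norm_num)⟩,
    fun θ => ?_⟩
  calc min (1 / 2) (f θm / ∑ θ, μ θ * f θ) * μ θ ≤ f θm / (∑ θ, μ θ * f θ) * μ θ :=
        mul_le_mul_of_nonneg_right (min_le_right _ _) (hμ.1 θ)
    _ ≤ tilt μ f θ := by
        rw [tilt, div_mul_eq_mul_div, mul_comm]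
        exact div_le_div_of_nonneg_right
          (mul_le_mul_of_nonneg_left (hmin θ (mem_univ θ)) (hμ.1 θ)) hZ.le

/-- A weighted Chebyshev sum inequality, with its equality case. -/
theorem IsProb.sum_tilt_mul_lt_or_tilt_eq {R : Θ → ℝ} {g : ℝ → ℝ} (hμ : IsProb μ)
    (hg : Antitone g) (hpos : ∀ x, 0 < g x) :
    ∑ θ, tilt μ (fun θ => g (R θ)) θ * R θ < ∑ θ, μ θ * R θ ∨
      tilt μ (fun θ => g (R θ)) = μ := by
  set m := ∑ θ, μ θ * R θ
  have hZ := hμ.sum_mul_pos (f := fun θ => g (R θ)) fun θ => hpos _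
  -- centring at the mean `m` turns the covariance into a sum of nonpositive terms
  have hcov : ∑ θ, μ θ * ((g (R θ) - g m) * (R θ - m))
      = ∑ θ, μ θ * g (R θ) * R θ - (∑ θ, μ θ * g (R θ)) * m := by
    calc ∑ θ, μ θ * ((g (R θ) - g m) * (R θ - m))
        = ∑ θ, (μ θ * g (R θ) * R θ - μ θ * g (R θ) * m - g m * (μ θ * R θ) + g m * m * μ θ) :=
          sum_congr rfl fun θ _ => by ring
      _ = _ := by
          simp only [sum_add_distrib, sum_sub_distrib, ← sum_mul, ← mul_sum, hμ.2]
          ring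
  have hterm : ∀ θ, μ θ * ((g (R θ) - g m) * (R θ - m)) ≤ 0 := fun θ =>
    mul_nonpos_of_nonneg_of_nonpos (hμ.1 θ) (hg.sub_mul_sub_nonpos _ _)
  by_cases hconst : ∀ θ, 0 < μ θ → g (R θ) = g m
  · right
    have hμg : ∀ θ, μ θ * g (R θ) = μ θ * g m := fun θ => by
      rcases (hμ.1 θ).eq_or_lt with h0 | hθ
      · rw [← h0, zero_mul, zero_mul]
      · rw [hconst θ hθ]
    calc tilt μ (fun θ => g (R θ)) = tilt μ (fun _ => g m) := by
          funext θ
          simp only [tilt, hμg]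
      _ = μ := hμ.tilt_const (hpos m).ne'
  · left
    push Not at hconst
    obtain ⟨θ₀, hθ₀, hne⟩ := hconst
    have hneg : ∑ θ, μ θ * ((g (R θ) - g m) * (R θ - m)) < 0 := by
      simpa using sum_lt_sum (fun θ _ => hterm θ)
        ⟨θ₀, mem_univ θ₀, mul_neg_of_pos_of_neg hθ₀ (hg.sub_mul_sub_neg hne)⟩
    rw [sum_tilt_mul, div_lt_iff₀ hZ]
    linarith

end Weights

theorem sum_mul_deriv_mul_sub_nonpos {Θ : Type*} [Fintype Θ] {φ : ℝ → ℝ}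
    (hφ : Differentiable ℝ φ) (μ R E : Θ → ℝ)
    (hmax : ∀ ε ∈ Set.Icc (0 : ℝ) 1,
      ∑ θ, μ θ * φ (ε * E θ + (1 - ε) * R θ) ≤ ∑ θ, μ θ * φ (R θ)) :
    ∑ θ, μ θ * (deriv φ (R θ) * (E θ - R θ)) ≤ 0 := by
  set H : ℝ → ℝ := fun ε => ∑ θ, μ θ * φ (ε * E θ + (1 - ε) * R θ)
  have hH : HasDerivAt H (∑ θ, μ θ * (deriv φ (R θ) * (E θ - R θ))) 0 := by
    refine HasDerivAt.fun_sum fun θ _ => HasDerivAt.const_mul (μ θ) ?_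
    have hseg : HasDerivAt (fun ε : ℝ => ε * E θ + (1 - ε) * R θ) (E θ - R θ) 0 := by
      refine ((hasDerivAt_mul_const (E θ - R θ)).const_add (R θ)).congr_of_eventuallyEq
        (Filter.Eventually.of_forall fun ε => ?_)
      ring
    have hφR : HasDerivAt φ (deriv φ (R θ)) (0 * E θ + (1 - 0) * R θ) := by
      simpa using (hφ (R θ)).hasDerivAt
    exact hφR.comp 0 hseg
  have hloc : IsLocalMaxOn H (Set.Icc 0 1) 0 :=
    IsMaxOn.localize fun ε hε => by simpa [H] using hmax ε hε
  simpa using hloc.hasFDerivWithinAt_nonpos hH.hasFDerivAt.hasFDerivWithinAt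
    (mem_posTangentConeAt_of_segment_subset (y := 1) (by simp [segment_eq_Icc]))

section Obedience

variable {Θ Ω A : Type*} [Fintype Θ] [Fintype Ω] [Fintype A] [DecidableEq A]
  {φ : ℝ → ℝ} {p : Ω → ℝ} {ur : A → Ω → ℝ} {σ : Θ → Ω → A → ℝ} {μ : Θ → ℝ}

theorem AmbObedient.sum_mul_deriv_mul_le (hφ : Differentiable ℝ φ) (h : AmbObedient φ p ur σ μ)
    {τ : A → A → ℝ} (hτ : IsKernel τ) :
    ∑ θ, μ θ * deriv φ (expPayoff p ur (σ θ) tauStar) * expPayoff p ur (σ θ) τ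
      ≤ ∑ θ, μ θ * deriv φ (expPayoff p ur (σ θ) tauStar) * expPayoff p ur (σ θ) tauStar := by
  have hfoc := sum_mul_deriv_mul_sub_nonpos hφ μ (fun θ => expPayoff p ur (σ θ) tauStar)
    (fun θ => expPayoff p ur (σ θ) τ) fun ε hε => by
      simpa only [expPayoff_mixExp_right] using h _ (hτ.mixExp isKernel_tauStar hε)
  simpa only [mul_sub, ← mul_assoc, sum_sub_distrib, sub_nonpos] using hfoc

theorem AmbObedient.obedient_convexComb_tilt (hmono : Monotone φ) (hφ : Differentiable ℝ φ)
    (hμ : ∀ θ, 0 ≤ μ θ) (h : AmbObedient φ p ur σ μ) :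
    Obedient p ur (convexComb (tilt μ fun θ => deriv φ (expPayoff p ur (σ θ) tauStar)) σ) := by
  intro τ hτ
  rw [expPayoff_convexComb, expPayoff_convexComb, sum_tilt_mul, sum_tilt_mul]
  exact div_le_div_of_nonneg_right (h.sum_mul_deriv_mul_le hφ hτ)
    (sum_nonneg fun θ _ => mul_nonneg (hμ θ) hmono.deriv_nonneg)

end Obedience

theorem exists_paretoRankedSplitting_of_mul_le {Ω A : Type*} [Fintype Ω] [Fintype A]
    [DecidableEq A] {p : Ω → ℝ} {us ur : A → Ω → ℝ} {σhat σbar : Ω → A → ℝ} {lam : ℝ}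
    (hhat : IsKernel σhat) (hbar : IsKernel σbar) (hlam : lam ∈ Set.Ioo (0 : ℝ) 1)
    (hle : ∀ ω a, lam * σbar ω a ≤ σhat ω a)
    (hs : expPayoff p us σhat tauStar < expPayoff p us σbar tauStar)
    (hr : expPayoff p ur σhat tauStar < expPayoff p ur σbar tauStar) :
    ∃ σlo, ParetoRankedSplitting p us ur σbar σlo lam σhat := by
  have hlam' : 0 < 1 - lam := sub_pos.2 hlam.2
  set σlo : Ω → A → ℝ := fun ω a => (σhat ω a - lam * σbar ω a) / (1 - lam)
  have hmix : mixExp lam σbar σlo = σhat := by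
    funext ω a
    simp only [mixExp, σlo]
    field_simp
    ring
  have hlo : IsKernel σlo := ⟨fun ω a => div_nonneg (sub_nonneg.2 (hle ω a)) hlam'.le, fun ω => by
    simp only [σlo, ← sum_div, sum_sub_distrib, ← mul_sum, hhat.2, hbar.2, mul_one,
      div_self hlam'.ne']⟩
  have hworse : ∀ u : A → Ω → ℝ, expPayoff p u σhat tauStar < expPayoff p u σbar tauStar →
      expPayoff p u σlo tauStar < expPayoff p u σbar tauStar := fun u hu => by
    have hsplit := expPayoff_mixExp p u lam σbar σlo tauStar
    rw [hmix] at hsplit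
    nlinarith
  exact ⟨σlo, hbar, hlo, hlam, hmix, Or.inl ⟨hworse us hs, hworse ur hr⟩⟩

theorem necessity_of_pareto_ranked_splitting_general
    {Ω A Θ : Type*} [Fintype Ω] [Fintype A] [DecidableEq A] [Fintype Θ]
    (p : Ω → ℝ) (us ur : A → Ω → ℝ)
    (φs φr : ℝ → ℝ) (hφs : SmoothIndex φs) (hφr : SmoothIndex φr)
    (usBP : ℝ)
    (husBP : IsGreatest {x : ℝ | ∃ σ0 : Ω → A → ℝ,
      IsKernel σ0 ∧ Obedient p ur σ0 ∧ x = expPayoff p us σ0 tauStar} usBP)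
    (σ : Θ → Ω → A → ℝ) (hσ : ∀ θ, IsKernel (σ θ)) (μ : Θ → ℝ) (hμ : IsProb μ)
    (hobed : AmbObedient φr p ur σ μ)
    (hben : φs usBP < ∑ θ, μ θ * φs (expPayoff p us (σ θ) tauStar)) :
    (¬ ∃ α β : ℝ, ∀ x, φr x = α * x + β) ∧
    ∃ (σhat σbar σlo : Ω → A → ℝ) (lam : ℝ),
      IsKernel σhat ∧ Obedient p ur σhat ∧
      ParetoRankedSplitting p us ur σbar σlo lam σhat ∧
      usBP < expPayoff p us σbar tauStar := by
  obtain ⟨hφr_mono, hφr_conc, hφr_diff⟩ := hφr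
  set ν := tilt μ fun θ => deriv φr (expPayoff p ur (σ θ) tauStar) with hν
  have hderiv_pos : ∀ x, 0 < deriv φr x := fun x =>
    hφr_conc.deriv_pos_of_strictMono hφr_mono (hφr_diff x)
  have hub : ∀ σ₀, IsKernel σ₀ → Obedient p ur σ₀ → expPayoff p us σ₀ tauStar ≤ usBP :=
    fun σ₀ hk ho => husBP.2 ⟨σ₀, hk, ho, rfl⟩
  have hbar_gt : usBP < expPayoff p us (convexComb μ σ) tauStar := by
    rw [expPayoff_convexComb]
    exact hφs.2.1.lt_sum_mul_of_lt_sum_mul_map hφs.1 hμ hben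
  have hbar_not : ¬ Obedient p ur (convexComb μ σ) := fun h =>
    (hub _ (IsKernel.convexComb hμ hσ) h).not_gt hbar_gt
  have hhat : Obedient p ur (convexComb ν σ) :=
    hobed.obedient_convexComb_tilt hφr_mono.monotone hφr_diff hμ.1
  have hν_ne : ν ≠ μ := fun h => hbar_not (h ▸ hhat)
  refine ⟨fun ⟨α, β, hφr_affine⟩ => hν_ne ?_, ?_⟩
  · have hderiv : ∀ x, deriv φr x = α := fun x => by simp [funext hφr_affine]
    simp only [hν, hderiv]
    exact hμ.tilt_const (hderiv 0 ▸ hderiv_pos 0).ne'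
  have hr := (hμ.sum_tilt_mul_lt_or_tilt_eq (R := fun θ => expPayoff p ur (σ θ) tauStar)
    (antitoneOn_univ.1 (hφr_conc.antitoneOn_deriv fun x _ => hφr_diff x)) hderiv_pos).resolve_right
    hν_ne
  have hhat_ker : IsKernel (convexComb ν σ) :=
    IsKernel.convexComb (isProb_tilt hμ fun θ => hderiv_pos _) hσ
  obtain ⟨lam, hlam, hle⟩ := hμ.exists_mul_le_tilt fun θ => hderiv_pos _
  obtain ⟨σlo, hsplit⟩ := exists_paretoRankedSplitting_of_mul_le hhat_ker
    (IsKernel.convexComb hμ hσ) hlam (mul_convexComb_le (fun θ => (hσ θ).1) hle)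
    ((hub _ hhat_ker hhat).trans_lt hbar_gt)
    (by rw [expPayoff_convexComb, expPayoff_convexComb]; exact hr)
  exact ⟨_, _, σlo, lam, hhat_ker, hhat, hsplit, hbar_gt⟩

/-- Theorem 3: if some obedient ambiguous experiment benefits the sender
(`U_s(σ, μ, τ*) > u_s^BP`, stated via the strictly increasing `φs`), then `φr` is not
affine and there exists an obedient experiment `σhat` with a Pareto-ranked splitting
`(σbar, σlo, lam)` such that `u_s(σbar, τ*) > u_s^BP`. -/
theorem necessity_of_pareto_ranked_splitting
    {Ω A Θ : Type*} [Fintype Ω] [Fintype A] [DecidableEq A] [Fintype Θ]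
    (p : Ω → ℝ) (hp : IsProb p) (us ur : A → Ω → ℝ)
    (φs φr : ℝ → ℝ) (hφs : SmoothIndex φs) (hφr : SmoothIndex φr)
    (usBP : ℝ)
    (husBP : IsGreatest {x : ℝ | ∃ σ0 : Ω → A → ℝ,
      IsKernel σ0 ∧ Obedient p ur σ0 ∧ x = expPayoff p us σ0 tauStar} usBP)
    (σ : Θ → Ω → A → ℝ) (hσ : ∀ θ, IsKernel (σ θ)) (μ : Θ → ℝ) (hμ : IsProb μ)
    (hobed : AmbObedient φr p ur σ μ)
    (hben : φs usBP < ∑ θ, μ θ * φs (expPayoff p us (σ θ) tauStar)) :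
    (¬ ∃ α β : ℝ, ∀ x, φr x = α * x + β) ∧
    ∃ (σhat σbar σlo : Ω → A → ℝ) (lam : ℝ),
      IsKernel σhat ∧ Obedient p ur σhat ∧
      ParetoRankedSplitting p us ur σbar σlo lam σhat ∧
      usBP < expPayoff p us σbar tauStar :=
  necessity_of_pareto_ranked_splitting_general p us ur φs φr hφs hφr usBP husBP σ hσ μ hμ hobed hben
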